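/- arXiv:0901.1918 — 2 statements merged into one kernel-verified Lean document; each statement's English description precedes it below -/
import Mathlib

section
/- Let q ∈ (−1,0). Then μ_q is a probability measure on ℝ, the topological support of μ_q equals the interval [−2,2], and μ_q has no atoms, i.e. μ_q({x}) = 0 for every x ∈ ℝ. -/
open MeasureTheory

/-- `c q r` for `r ≥ 1`: the Fourier coefficient `q^(r-1)(1+q)^2/((1+q^(r+1))(1+q^(r-1)))`. -/
noncomputable def circCoeff (q : ℝ) (r : ℕ) : ℝ :=
  q ^ (r - 1) * (1 + q) ^ 2 / ((1 + q ^ (r + 1)) * (1 + q ^ (r - 1)))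

/-- The circular density `F_q(t) = 1 + 2 ∑_{r≥1} (-1)^r c_r(q) cos(2rt)`. -/
noncomputable def circDensity (q : ℝ) (t : ℝ) : ℝ :=
  1 + 2 * ∑' r : ℕ, (-1 : ℝ) ^ (r + 1) * circCoeff q (r + 1) * Real.cos (2 * (r + 1) * t)

/-- The measure `μ_q`: pushforward under `t ↦ 2 cos t` of the measure on `[0, 2π]`
with density `F_q(t)/(2π)`. -/
noncomputable def muQ (q : ℝ) : Measure ℝ :=
  Measure.map (fun t => 2 * Real.cos t)
    ((volume.restrict (Set.Icc 0 (2 * Real.pi))).withDensity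
      (fun t => ENNReal.ofReal (circDensity q t / (2 * Real.pi))))

/-! For `q ∈ (-1, 0]` one has `(-1)^(r+1) c_{r+1}(q) = -d_r` with `d_r = circWeight q r ≥ 0`,
and `∑ d_r = 1/2` because `d_r` telescopes through `(1 + q^k)⁻¹`. Hence
`F_q(t) = 2 ∑ d_r (1 - cos (2(r+1)t))`, which is nonnegative and positive on `(0, π)`; its cosine
modes integrate to zero over `[0, 2π]`, so the total mass is one. Each `x ∈ [-2, 2]` is `2 cos t`
with `t ∈ [0, π]`, so a neighbourhood of `x` pulls back to a set meeting `(0, π)` in a nonempty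
open set. Finally `{t | 2 cos t = x}` is countable and the circular measure is absolutely
continuous, so `μ_q` has no atoms. -/

open Real Set Filter Topology
open scoped ENNReal

section CosineSeries

variable {a : ℕ → ℝ}

lemma continuous_tsum_mul_cos (ha : Summable fun r => ‖a r‖) :
    Continuous fun t : ℝ => ∑' r : ℕ, a r * cos (2 * (r + 1) * t) :=
  continuous_tsum (fun r => by fun_prop) ha fun r t => by
    simpa [norm_mul] using mul_le_of_le_one_right (norm_nonneg (a r)) (abs_cos_le_one _)

lemma integral_cos_two_mul_succ (r : ℕ) : ∫ t in Icc 0 (2 * π), cos (2 * (r + 1) * t) = 0 := by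
  have hr : (2 * ((r : ℝ) + 1)) ≠ 0 := by positivity
  rw [integral_Icc_eq_integral_Ioc, ← intervalIntegral.integral_of_le (by positivity),
    intervalIntegral.integral_comp_mul_left (fun t => cos t) hr, integral_cos, mul_zero, sin_zero,
    show 2 * ((r : ℝ) + 1) * (2 * π) = ((4 * (r + 1) : ℕ) : ℝ) * π by push_cast; ring,
    sin_nat_mul_pi, sub_zero, smul_zero]

lemma integral_tsum_mul_cos (ha : Summable fun r => ‖a r‖) :
    ∫ t in Icc 0 (2 * π), ∑' r : ℕ, a r * cos (2 * (r + 1) * t) = 0 := by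
  rw [← integral_tsum_of_summable_integral_norm]
  · simp [integral_const_mul, integral_cos_two_mul_succ]
  · exact fun r => (by fun_prop : Continuous _).integrableOn_Icc
  · refine .of_nonneg_of_le (fun r => integral_nonneg fun t => norm_nonneg _) (fun r => ?_)
      (ha.mul_right (volume.real (Icc (0 : ℝ) (2 * π))))
    refine (Real.le_norm_self _).trans
      (norm_setIntegral_le_of_norm_le_const measure_Icc_lt_top fun t _ => ?_)
    simpa [norm_mul] using mul_le_of_le_one_right (norm_nonneg (a r)) (abs_cos_le_one _)

end CosineSeries

section Coefficients

variable {q : ℝ}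

lemma abs_lt_one_of_mem_Ioc (hq : q ∈ Ioc (-1) 0) : |q| < 1 :=
  abs_lt.2 ⟨hq.1, hq.2.trans_lt one_pos⟩

noncomputable def circWeight (q : ℝ) (r : ℕ) : ℝ :=
  |q| ^ r * (1 + q) ^ 2 / ((1 + q ^ (r + 2)) * (1 + q ^ r))

lemma one_sub_abs_le_one_add_pow (hq : |q| ≤ 1) (k : ℕ) : 1 - |q| ≤ 1 + q ^ k := by
  rcases k.eq_zero_or_pos with rfl | hk
  · linarith [abs_nonneg q]
  · have : |q ^ k| ≤ |q| := by rw [abs_pow]; exact pow_le_of_le_one (abs_nonneg q) hq hk.ne'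
    linarith [neg_abs_le (q ^ k)]

lemma one_add_pow_pos (hq : |q| < 1) (k : ℕ) : 0 < 1 + q ^ k :=
  (sub_pos.2 hq).trans_le (one_sub_abs_le_one_add_pow hq.le k)

lemma neg_one_pow_mul_circCoeff_succ (hq : q ≤ 0) (r : ℕ) :
    (-1 : ℝ) ^ (r + 1) * circCoeff q (r + 1) = -circWeight q r := by
  rw [circWeight, abs_of_nonpos hq, neg_pow, circCoeff, Nat.add_sub_cancel, pow_succ]
  ring

lemma circWeight_nonneg (hq : |q| < 1) (r : ℕ) : 0 ≤ circWeight q r :=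
  have := one_add_pow_pos hq
  div_nonneg (by positivity) (mul_nonneg (this _).le (this _).le)

lemma circWeight_zero_pos (hq : |q| < 1) : 0 < circWeight q 0 := by
  have h := one_add_pow_pos hq
  have : 0 < 1 + q := by simpa using h 1
  exact div_pos (by simpa using pow_pos this 2) (mul_pos (h _) (h _))

lemma circWeight_le (hq : |q| < 1) (r : ℕ) :
    circWeight q r ≤ (1 + q) ^ 2 / (1 - |q|) ^ 2 * |q| ^ r := by
  have h := one_sub_abs_le_one_add_pow hq.le
  have : (1 - |q|) ^ 2 ≤ (1 + q ^ (r + 2)) * (1 + q ^ r) := by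
    rw [sq]; exact mul_le_mul (h _) (h _) (by linarith) (one_add_pow_pos hq _).le
  rw [circWeight, div_mul_eq_mul_div, mul_comm]
  exact div_le_div_of_nonneg_left (by positivity) (by nlinarith) this

lemma summable_circWeight (hq : |q| < 1) : Summable (circWeight q) :=
  .of_nonneg_of_le (circWeight_nonneg hq) (circWeight_le hq)
    ((summable_geometric_of_lt_one (abs_nonneg q) hq).mul_left _)

lemma summable_circWeight_mul (hq : |q| < 1) {f : ℕ → ℝ} {C : ℝ} (hf : ∀ r, ‖f r‖ ≤ C) :
    Summable fun r => circWeight q r * f r :=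
  .of_norm_bounded ((summable_circWeight hq).mul_right C) fun r => by
    rw [norm_mul, Real.norm_of_nonneg (circWeight_nonneg hq r)]
    exact mul_le_mul_of_nonneg_left (hf r) (circWeight_nonneg hq r)

lemma hasSum_circWeight (hq : q ∈ Ioc (-1) 0) : HasSum (circWeight q) (1 / 2) := by
  have hq1 := abs_lt_one_of_mem_Ioc hq
  have hne : ∀ k : ℕ, 1 + q ^ k ≠ 0 := fun k => (one_add_pow_pos hq1 k).ne'
  have hq0 : q - 1 ≠ 0 := by linarith [hq.2]
  set a : ℕ → ℝ := fun k => (1 + q ^ k)⁻¹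
  set w : ℕ → ℝ := fun r => (-1) ^ r * (a r - a (r + 1))
  have hκ : (1 + q) / (q - 1) * w 0 = 1 / 2 := by
    have := hne 1
    simp only [w, a]
    field_simp
    ring
  have htel : ∀ r, circWeight q r = (1 + q) / (q - 1) * (w r - w (r + 1)) := by
    intro r
    have := hne r
    have := hne (r + 2)
    simp only [circWeight, w, a, abs_of_nonpos hq.2]
    rw [neg_pow q]
    field_simp
    ring
  have hw : Tendsto w atTop (𝓝 0) := by
    have ha : Tendsto a atTop (𝓝 1) := by
      simpa [a] using ((tendsto_pow_atTop_nhds_zero_of_abs_lt_one hq1).const_add 1).inv₀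
        (by norm_num)
    rw [tendsto_zero_iff_norm_tendsto_zero]
    simpa [w, norm_mul] using (ha.sub (ha.comp (tendsto_add_atTop_nat 1))).norm
  rw [hasSum_iff_tendsto_nat_of_nonneg (circWeight_nonneg hq1), ← hκ]
  simp_rw [htel, ← Finset.mul_sum, Finset.sum_range_sub']
  simpa using (tendsto_const_nhds.sub hw).const_mul ((1 + q) / (q - 1))

end Coefficients

section Density

variable {q : ℝ}

lemma summable_norm_circCoeff (hq : q ∈ Ioc (-1) 0) :
    Summable fun r : ℕ => ‖(-1 : ℝ) ^ (r + 1) * circCoeff q (r + 1)‖ := by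
  have hq1 := abs_lt_one_of_mem_Ioc hq
  simp_rw [neg_one_pow_mul_circCoeff_succ hq.2, norm_neg,
    Real.norm_of_nonneg (circWeight_nonneg hq1 _)]
  exact summable_circWeight hq1

lemma continuous_circDensity (hq : q ∈ Ioc (-1) 0) : Continuous (circDensity q) :=
  continuous_const.add (continuous_const.mul
    (continuous_tsum_mul_cos (summable_norm_circCoeff hq)))

lemma integral_circDensity (hq : q ∈ Ioc (-1) 0) :
    ∫ t in Icc 0 (2 * π), circDensity q t = 2 * π := by
  have hS := continuous_tsum_mul_cos (summable_norm_circCoeff hq)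
  simp only [circDensity]
  rw [integral_add (integrable_const 1) (hS.const_mul 2).integrableOn_Icc,
    integral_const_mul, integral_tsum_mul_cos (summable_norm_circCoeff hq)]
  simp [pi_pos.le]

lemma circDensity_eq_tsum (hq : q ∈ Ioc (-1) 0) (t : ℝ) :
    circDensity q t = 2 * ∑' r : ℕ, circWeight q r * (1 - cos (2 * (r + 1) * t)) := by
  have hq1 := abs_lt_one_of_mem_Ioc hq
  simp_rw [mul_one_sub, (summable_circWeight hq1).tsum_sub
    (summable_circWeight_mul hq1 fun r => abs_cos_le_one _), (hasSum_circWeight hq).tsum_eq,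
    circDensity, neg_one_pow_mul_circCoeff_succ hq.2, neg_mul, tsum_neg]
  ring

lemma circDensity_nonneg (hq : q ∈ Ioc (-1) 0) (t : ℝ) : 0 ≤ circDensity q t := by
  have hq1 := abs_lt_one_of_mem_Ioc hq
  rw [circDensity_eq_tsum hq]
  exact mul_nonneg zero_le_two (tsum_nonneg fun r =>
    mul_nonneg (circWeight_nonneg hq1 r) (sub_nonneg.2 (cos_le_one _)))

lemma circDensity_pos (hq : q ∈ Ioc (-1) 0) {t : ℝ} (ht : t ∈ Ioo 0 π) : 0 < circDensity q t := by
  have hq1 := abs_lt_one_of_mem_Ioc hq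
  have hcos : cos (2 * t) < 1 := (cos_le_one _).lt_of_ne fun h => by
    have := (cos_eq_one_iff_of_lt_of_lt (by linarith [ht.1, pi_pos]) (by linarith [ht.2])).1 h
    linarith [ht.1]
  rw [circDensity_eq_tsum hq]
  refine mul_pos two_pos (Summable.tsum_pos ?_ (fun r =>
    mul_nonneg (circWeight_nonneg hq1 r) (sub_nonneg.2 (cos_le_one _))) 0 ?_)
  · exact summable_circWeight_mul hq1 (C := 1 + 1) fun r =>
      (norm_sub_le _ _).trans (by simpa using abs_cos_le_one _)
  · simpa using mul_pos (circWeight_zero_pos hq1) (sub_pos.2 hcos)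

end Density

lemma countable_setOf_cos_eq (c : ℝ) : {t : ℝ | cos t = c}.Countable := by
  refine ((countable_range fun k : ℤ => 2 * k * π + arccos c).union
    (countable_range fun k : ℤ => 2 * k * π - arccos c)).mono ?_
  rintro t (rfl : cos t = _)
  obtain ⟨k, hk | hk⟩ := cos_eq_cos_iff.1 (cos_arccos (neg_one_le_cos t) (cos_le_one t))
  exacts [Or.inl ⟨k, hk.symm⟩, Or.inr ⟨k, hk.symm⟩]

lemma map_two_mul_cos_singleton {ν : Measure ℝ} (hν : ν ≪ volume) (x : ℝ) :
    ν.map (fun t => 2 * cos t) {x} = 0 := by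
  rw [Measure.map_apply (by fun_prop) (measurableSet_singleton x)]
  refine hν ((countable_setOf_cos_eq (x / 2)).measure_zero _ |> measure_mono_null fun t ht => ?_)
  simp only [mem_preimage, mem_singleton_iff] at ht
  show cos t = x / 2
  linarith

lemma map_two_mul_cos_compl_Icc (ν : Measure ℝ) :
    ν.map (fun t => 2 * cos t) (Icc (-2) 2)ᶜ = 0 := by
  rw [Measure.map_apply (by fun_prop) measurableSet_Icc.compl, preimage_compl,
    show (fun t => 2 * cos t) ⁻¹' Icc (-2) 2 = univ from
      eq_univ_of_forall fun t => ⟨by linarith [neg_one_le_cos t], by linarith [cos_le_one t]⟩,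
    compl_univ, measure_empty]

lemma map_two_mul_cos_pos {ν : Measure ℝ}
    (hν : ∀ W, IsOpen W → W.Nonempty → W ⊆ Ioo 0 π → 0 < ν W) {x : ℝ} (hx : x ∈ Icc (-2) 2)
    {U : Set ℝ} (hU : IsOpen U) (hxU : x ∈ U) : 0 < ν.map (fun t => 2 * cos t) U := by
  have hcont : Continuous fun t => 2 * cos t := by fun_prop
  have hV : IsOpen ((fun t => 2 * cos t) ⁻¹' U) := hU.preimage hcont
  have hxV : arccos (x / 2) ∈ (fun t => 2 * cos t) ⁻¹' U := by
    rw [mem_preimage, cos_arccos (by linarith [hx.1]) (by linarith [hx.2])]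
    convert hxU using 1; ring
  have hcl : arccos (x / 2) ∈ closure (Ioo 0 π) := by
    rw [closure_Ioo pi_pos.ne]; exact ⟨arccos_nonneg _, arccos_le_pi _⟩
  rw [Measure.map_apply hcont.measurable hU.measurableSet]
  exact (hν _ (hV.inter isOpen_Ioo) (mem_closure_iff.1 hcl _ hV hxV) inter_subset_right).trans_le
    (measure_mono inter_subset_left)

lemma withDensity_restrict_pos_of_isOpen {α : Type*} [TopologicalSpace α] [MeasurableSpace α]
    [OpensMeasurableSpace α] {μ : Measure α} [μ.IsOpenPosMeasure] {S W : Set α} {f : α → ℝ≥0∞}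
    (hf : Measurable f) (hW : IsOpen W) (hWne : W.Nonempty) (hWS : W ⊆ S)
    (hpos : ∀ t ∈ W, f t ≠ 0) : 0 < (μ.restrict S).withDensity f W := by
  rw [withDensity_apply _ hW.measurableSet, Measure.restrict_restrict hW.measurableSet,
    inter_eq_left.2 hWS, setLIntegral_pos_iff hf,
    inter_eq_right.2 (show W ⊆ Function.support f from hpos)]
  exact hW.measure_pos μ hWne

lemma isProbabilityMeasure_muQ {q : ℝ} (hq : q ∈ Ioc (-1) 0) : IsProbabilityMeasure (muQ q) := by
  have hint : IntegrableOn (fun t => circDensity q t / (2 * π)) (Icc 0 (2 * π)) :=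
    ((continuous_circDensity hq).div_const _).integrableOn_Icc
  have : IsProbabilityMeasure ((volume.restrict (Icc 0 (2 * π))).withDensity
      fun t => ENNReal.ofReal (circDensity q t / (2 * π))) := by
    constructor
    rw [withDensity_apply _ MeasurableSet.univ, Measure.restrict_univ,
      ← ofReal_integral_eq_lintegral_ofReal hint (.of_forall fun t =>
        div_nonneg (circDensity_nonneg hq t) (by positivity)),
      integral_div, integral_circDensity hq, div_self (by positivity), ENNReal.ofReal_one]
  exact Measure.isProbabilityMeasure_map (by fun_prop)

/-- `μ_q` is a probability measure, its topological support (the set of points all of whose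
open neighbourhoods have positive measure) is `[-2, 2]`, and it has no atoms. -/
theorem stmt4 (q : ℝ) (hq : q ∈ Set.Ioo (-1 : ℝ) 0) :
    IsProbabilityMeasure (muQ q) ∧
    {x : ℝ | ∀ U : Set ℝ, IsOpen U → x ∈ U → 0 < muQ q U} = Set.Icc (-2 : ℝ) 2 ∧
    (∀ x : ℝ, muQ q {x} = 0) := by
  have hq' : q ∈ Ioc (-1) 0 := Ioo_subset_Ioc_self hq
  refine ⟨isProbabilityMeasure_muQ hq', Subset.antisymm (fun x hx => ?_) fun x hx U hU hxU => ?_,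
    map_two_mul_cos_singleton (withDensity_absolutelyContinuous _ _ |>.trans
      Measure.restrict_le_self.absolutelyContinuous)⟩
  · by_contra hx'
    exact (hx _ isClosed_Icc.isOpen_compl hx').ne' (map_two_mul_cos_compl_Icc _)
  · refine map_two_mul_cos_pos (fun W hW hWne hWsub => ?_) hx hU hxU
    refine withDensity_restrict_pos_of_isOpen ?_ hW hWne ?_ fun t ht => ?_
    · exact ((continuous_circDensity hq').measurable.div_const _).ennreal_ofReal
    · exact hWsub.trans (Ioo_subset_Icc_self.trans (Icc_subset_Icc le_rfl (by linarith [pi_pos])))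
    · simpa using div_pos (circDensity_pos hq' (hWsub ht)) (by positivity)
end

section
/- As q → 0⁻, the functions F_q converge uniformly on ℝ to the function t ↦ 2 sin² t (which is the circular density of the standard semicircle distribution); that is, lim_{q→0⁻} sup_{t∈ℝ} |F_q(t) − 2 sin² t| = 0. -/
/-!
At `q = 0` the only nonzero coefficient is `c₁(0) = 1/2`, and `F_0(t) = 1 - cos 2t = 2 sin² t`.
For `-1/2 ≤ q ≤ 0` the denominators of `c_r(q)` are at least `1/2`, so each coefficient moves by
at most `8 |q| 2⁻ʳ` from its value at `0`. Summing, `|F_q(t) - 2 sin² t| ≤ 32 |q|` for every `t`.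
-/

open Filter Topology Real

theorem TendstoUniformly.of_dist_le {ι β α : Type*} [PseudoMetricSpace α] {F : ι → β → α}
    {f : β → α} {p : Filter ι} {b : ι → ℝ} (hb : Tendsto b p (𝓝 0))
    (h : ∀ᶠ i in p, ∀ x, dist (f x) (F i x) ≤ b i) : TendstoUniformly F f p := by
  rw [Metric.tendstoUniformly_iff]
  intro ε hε
  filter_upwards [h, hb.eventually (gt_mem_nhds hε)] with i hi hbi x
  exact (hi x).trans_lt hbi

lemma one_half_le_one_add_pow {q : ℝ} (hq : |q| ≤ 1 / 2) (s : ℕ) : 1 / 2 ≤ 1 + q ^ s := by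
  rcases s with _ | s
  · norm_num
  · have : |q ^ (s + 1)| ≤ 1 / 2 := by
      rw [abs_pow]
      exact (pow_le_of_le_one (abs_nonneg q) (by linarith) s.succ_ne_zero).trans hq
    linarith [neg_abs_le (q ^ (s + 1))]

section Coefficients

variable {q : ℝ} (h₀ : -1 / 2 ≤ q) (h₁ : q ≤ 0)
include h₀ h₁

lemma abs_circCoeff_succ_le (r : ℕ) : |circCoeff q (r + 1)| ≤ 4 * |q| ^ r := by
  have hq : |q| ≤ 1 / 2 := abs_le.mpr ⟨by linarith, by linarith⟩
  have hden : 1 / 4 ≤ (1 + q ^ (r + 1 + 1)) * (1 + q ^ r) := by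
    nlinarith [one_half_le_one_add_pow hq (r + 1 + 1), one_half_le_one_add_pow hq r]
  have hnum : |q ^ r * (1 + q) ^ 2| ≤ |q| ^ r := by
    rw [abs_mul, abs_of_nonneg (sq_nonneg (1 + q)), abs_pow]
    exact mul_le_of_le_one_right (by positivity) (by nlinarith)
  rw [circCoeff, Nat.add_sub_cancel, abs_div, abs_of_pos (hden.trans_lt' (by norm_num))]
  calc |q ^ r * (1 + q) ^ 2| / ((1 + q ^ (r + 1 + 1)) * (1 + q ^ r))
      ≤ |q| ^ r / (1 / 4) := div_le_div₀ (by positivity) hnum (by norm_num) hden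
    _ = 4 * |q| ^ r := by ring

lemma abs_circCoeff_succ_sub_le (r : ℕ) :
    |circCoeff q (r + 1) - circCoeff 0 (r + 1)| ≤ 8 * |q| * (1 / 2) ^ r := by
  rcases r with _ | r
  · have hq : circCoeff q 1 - circCoeff 0 1 = q / (1 + q ^ 2) := by
      norm_num [circCoeff]
      field_simp
      ring
    rw [hq, abs_div, abs_of_pos (show 0 < 1 + q ^ 2 by positivity)]
    calc |q| / (1 + q ^ 2) ≤ |q| := div_le_self (abs_nonneg q) (by nlinarith)
      _ ≤ 8 * |q| * (1 / 2) ^ 0 := by linarith [abs_nonneg q]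
  · have hq : |q| ≤ 1 / 2 := abs_le.mpr ⟨by linarith, by linarith⟩
    have hzero : circCoeff 0 (r + 1 + 1) = 0 := by simp [circCoeff]
    rw [hzero, sub_zero]
    calc |circCoeff q (r + 1 + 1)| ≤ 4 * |q| ^ (r + 1) := abs_circCoeff_succ_le h₀ h₁ _
      _ = 4 * |q| * |q| ^ r := by ring
      _ ≤ 4 * |q| * (1 / 2) ^ r := by gcongr
      _ = 8 * |q| * (1 / 2) ^ (r + 1) := by ring

end Coefficients

noncomputable def circTerm (q t : ℝ) (r : ℕ) : ℝ :=
  (-1 : ℝ) ^ (r + 1) * circCoeff q (r + 1) * cos (2 * (r + 1) * t)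

lemma hasSum_circTerm_zero (t : ℝ) : HasSum (circTerm 0 t) (-cos (2 * t) / 2) := by
  convert hasSum_single 0 fun r hr => ?_ using 1
  · norm_num [circTerm, circCoeff, neg_div, div_eq_inv_mul]
  · simp [circTerm, circCoeff, hr]

lemma abs_tsum_circTerm_add_le {q : ℝ} (h₀ : -1 / 2 ≤ q) (h₁ : q ≤ 0) (t : ℝ) :
    |∑' r, circTerm q t r + cos (2 * t) / 2| ≤ 16 * |q| := by
  set d : ℕ → ℝ := fun r => circTerm q t r - circTerm 0 t r
  have hd : ∀ r, ‖d r‖ ≤ 8 * |q| * (1 / 2) ^ r := fun r => by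
    have : d r = (-1 : ℝ) ^ (r + 1) * (circCoeff q (r + 1) - circCoeff 0 (r + 1))
        * cos (2 * (r + 1) * t) := by simp only [d, circTerm]; ring
    rw [this, Real.norm_eq_abs, abs_mul, abs_mul, abs_pow, abs_neg, abs_one, one_pow, one_mul]
    exact (mul_le_of_le_one_right (abs_nonneg _) (abs_cos_le_one _)).trans
      (abs_circCoeff_succ_sub_le h₀ h₁ r)
  have hbound : HasSum (fun r : ℕ => 8 * |q| * (1 / 2) ^ r) (16 * |q|) := by
    rw [show 16 * |q| = 8 * |q| * 2 by ring]
    exact hasSum_geometric_two.mul_left _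
  have hsum : HasSum (circTerm q t) (-cos (2 * t) / 2 + ∑' r, d r) := by
    convert (hasSum_circTerm_zero t).add
      (Summable.of_norm_bounded hbound.summable hd).hasSum using 1
    ext r
    simp only [d]
    ring
  rw [hsum.tsum_eq, neg_div, neg_add_cancel_comm]
  exact tsum_of_norm_bounded hbound hd

lemma abs_circDensity_sub_le {q : ℝ} (h₀ : -1 / 2 ≤ q) (h₁ : q ≤ 0) (t : ℝ) :
    |circDensity q t - 2 * sin t ^ 2| ≤ 32 * |q| := by
  have hF : circDensity q t - 2 * sin t ^ 2 = 2 * (∑' r, circTerm q t r + cos (2 * t) / 2) := by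
    rw [cos_two_mul, cos_sq']
    simp only [circDensity, circTerm]
    ring
  rw [hF, abs_mul, abs_two]
  linarith [abs_tsum_circTerm_add_le h₀ h₁ t]

/-- As `q → 0⁻`, the densities `F_q` converge uniformly on `ℝ` to `t ↦ 2 sin² t`,
 the circular density of the standard semicircle distribution. -/
theorem stmt7 :
    TendstoUniformly (fun (q : ℝ) (t : ℝ) => circDensity q t)
      (fun t => 2 * Real.sin t ^ 2) (nhdsWithin (0 : ℝ) (Set.Iio 0)) := by
  have hb : Tendsto (fun q : ℝ => 32 * |q|) (𝓝[<] 0) (𝓝 0) := by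
    have : Tendsto (fun q : ℝ => 32 * |q|) (𝓝 0) (𝓝 (32 * |0|)) :=
      (continuous_const.mul continuous_abs).tendsto 0
    simpa using this.mono_left nhdsWithin_le_nhds
  refine TendstoUniformly.of_dist_le hb ?_
  filter_upwards [Ioo_mem_nhdsLT (show (-1 / 2 : ℝ) < 0 by norm_num)] with q hq t
  rw [dist_comm, Real.dist_eq]
  exact abs_circDensity_sub_le hq.1.le hq.2.le t
end
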